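/- A constant value-prediction gap yields a closed-loop optimal MPC model: suppose f : S → A → S and c ∈ ℝ satisfy ∑_{s'} (P s a s') · V⋆(s') − V⋆(f(s,a)) = c for all (s,a), where V⋆(s) := min_{a'} Q⋆(s,a'). Then for every horizon N ≥ 1 and every s ∈ S, a ∈ A, writing, for an action sequence u : Fin N → A with u_0 = a, x_0 = s and x_{k+1} = f(x_k, u_k), the deterministic MPC Q-function Q_N^MPC(s,a) := min over such u of [ ∑_{k=0}^{N-1} γ^k · l(x_k, u_k) + γ^N · V⋆(x_N) ] satisfies Q_N^MPC(s,a) = Q⋆(s,a) − c · ∑_{k=1}^{N} γ^k; consequently, for every s, the set of actions minimizing Q_N^MPC(s,·) equals the set of actions minimizing Q⋆(s,·), i.e., the MPC policy is optimal for the MDP even though the model f need not match the true transition kernel P. -/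
import Mathlib


open Finset

/-- The Bellman optimality operator `T` on action-value functions for a finite
discounted MDP: `(T Q)(s,a) = l(s,a) + γ ∑_{s'} P(s'|s,a) · min_{a'} Q(s',a')`. -/
noncomputable def Topt {S A : Type*} [Fintype S] [Fintype A] [Nonempty A]
    (P : S → A → PMF S) (l : S → A → ℝ) (γ : ℝ) (Q : S × A → ℝ) : S × A → ℝ :=
  fun sa => l sa.1 sa.2 +
    γ * ∑ s' : S, (P sa.1 sa.2 s').toReal *
      (univ.inf' univ_nonempty fun a' => Q (s', a'))

/-- Trajectory of the deterministic model `f` started at `s` under the action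
sequence `u : Fin N → A`: `x_0 = s`, `x_{k+1} = f(x_k, u_k)` for `k < N`. -/
def xtraj {S A : Type*} (f : S → A → S) (s : S) {N : ℕ} (u : Fin N → A) : ℕ → S
  | 0 => s
  | k + 1 => if h : k < N then f (xtraj f s u k) (u ⟨k, h⟩) else xtraj f s u k

/-- The discounted finite-horizon MPC cost
`∑_{k<N} γ^k l(x_k,u_k) + γ^N V̄(x_N)` along the trajectory of model `f`. -/
noncomputable def discCost {S A : Type*} (f : S → A → S) (l : S → A → ℝ) (γ : ℝ)
    (Vbar : S → ℝ) (s : S) {N : ℕ} (u : Fin N → A) : ℝ :=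
  (∑ k : Fin N, γ ^ (k : ℕ) * l (xtraj f s u (k : ℕ)) (u k)) +
    γ ^ N * Vbar (xtraj f s u N)

/-- The deterministic MPC Q-function of horizon `N`: the minimum of the
discounted MPC cost over action sequences `u : Fin N → A` whose first action
(when `N > 0`) is `a`. -/
noncomputable def QMPC {S A : Type*} [Fintype A] [Nonempty A]
    (f : S → A → S) (l : S → A → ℝ) (γ : ℝ) (Vbar : S → ℝ)
    (N : ℕ) (s : S) (a : A) : ℝ :=
  ⨅ u : {u : Fin N → A // ∀ h : 0 < N, u ⟨0, h⟩ = a}, discCost f l γ Vbar s u.1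


lemma xtraj_succ_eq {S A : Type*} (f : S → A → S) (s : S) {N : ℕ}
    (u : Fin (N+1) → A) (k : ℕ) :
    xtraj f s u (k+1) = xtraj f (f s (u 0)) (fun j : Fin N => u j.succ) k := by
  induction k with
  | zero => simp [xtraj]
  | succ k ih =>
    by_cases h : k < N
    · rw [xtraj, dif_pos (Nat.succ_lt_succ h), ih, xtraj, dif_pos h]
      rfl
    · rw [xtraj, dif_neg (by omega : ¬ k+1 < N+1), ih, xtraj, dif_neg h]

lemma discCost_succ {S A : Type*} (f : S → A → S) (l : S → A → ℝ) (γ : ℝ)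
    (V : S → ℝ) (s : S) {N : ℕ} (u : Fin (N+1) → A) :
    discCost f l γ V s u =
      l s (u 0) + γ * discCost f l γ V (f s (u 0)) (fun j : Fin N => u j.succ) := by
  unfold discCost
  rw [Fin.sum_univ_succ]
  have h0 : xtraj f s u 0 = s := rfl
  simp only [Fin.val_zero, pow_zero, one_mul, h0, Fin.val_succ, xtraj_succ_eq,
    pow_succ]
  rw [mul_add, mul_sum]
  simp only [mul_comm, mul_left_comm, mul_assoc]
  rw [add_assoc]

lemma discCost_one {S A : Type*} (f : S → A → S) (l : S → A → ℝ) (γ : ℝ)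
    (V : S → ℝ) (s : S) (u : Fin 1 → A) :
    discCost f l γ V s u = l s (u 0) + γ * V (f s (u 0)) := by
  unfold discCost
  rw [Fin.sum_univ_one]
  have h1 : xtraj f s u 1 = f s (u 0) := by simp [xtraj]
  simp [h1]
  congr 1

/-- A constant value-prediction gap yields a closed-loop optimal MPC model: if
`∑_{s'} P(s'|s,a) V⋆(s') − V⋆(f(s,a)) = c` for all `(s,a)`, then for every
horizon `N ≥ 1`, `Q_N^MPC(s,a) = Q⋆(s,a) − c ∑_{k=1}^N γ^k`, and for every `s`
the minimizers of `Q_N^MPC(s,·)` coincide with the minimizers of `Q⋆(s,·)`. -/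
theorem constant_value_gap_model_closed_loop_optimal
    {S A : Type*} [Fintype S] [Fintype A] [Nonempty S] [Nonempty A]
    (P : S → A → PMF S) (l : S → A → ℝ) (γ : ℝ) (hγ0 : 0 ≤ γ) (hγ1 : γ < 1)
    (Qstar : S × A → ℝ) (hQstar : Topt P l γ Qstar = Qstar)
    (Vstar : S → ℝ)
    (hVstar : ∀ s : S, Vstar s = univ.inf' univ_nonempty fun a' => Qstar (s, a'))
    (f : S → A → S) (c : ℝ)
    (hgap : ∀ s : S, ∀ a : A,
      (∑ s' : S, (P s a s').toReal * Vstar s') - Vstar (f s a) = c) :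
    ∀ N : ℕ, 0 < N →
      (∀ s : S, ∀ a : A,
        QMPC f l γ Vstar N s a = Qstar (s, a) - c * ∑ k ∈ Finset.Icc 1 N, γ ^ k) ∧
      (∀ s : S,
        {a : A | ∀ a' : A, QMPC f l γ Vstar N s a ≤ QMPC f l γ Vstar N s a'} =
        {a : A | ∀ a' : A, Qstar (s, a) ≤ Qstar (s, a')}) := by
  -- Bellman identity specialized with the gap hypothesis
  have hQ : ∀ s a, Qstar (s, a) = l s a + γ * (Vstar (f s a) + c) := by
    intro s a
    have h1 : Qstar (s, a) = l s a + γ * ∑ s' : S, (P s a s').toReal * Vstar s' := by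
      conv_lhs => rw [← hQstar]
      unfold Topt
      simp only [← hVstar]
    have h2 : ∑ s' : S, (P s a s').toReal * Vstar s' = Vstar (f s a) + c := by
      have := hgap s a; linarith
    rw [h1, h2]
  have hVle : ∀ s a, Vstar s ≤ Qstar (s, a) := fun s a => by
    rw [hVstar s]; exact Finset.inf'_le _ (mem_univ a)
  have hVex : ∀ s : S, ∃ a, Qstar (s, a) = Vstar s := fun s => by
    obtain ⟨a, _, ha⟩ := Finset.exists_mem_eq_inf' (univ_nonempty) (fun a' => Qstar (s, a'))
    exact ⟨a, by rw [hVstar s, ha]⟩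
  -- geometric sum shorthand
  set Sg : ℕ → ℝ := fun N => ∑ k ∈ Finset.Icc 1 N, γ ^ k with hSg
  have hSgrec : ∀ N : ℕ, Sg (N + 1) = γ + γ * Sg N := by
    have h1 : ∀ M : ℕ, Sg M = ∑ k ∈ Finset.range M, γ ^ (1 + k) := by
      intro M
      rw [hSg]
      simp only []
      rw [← Finset.Ico_add_one_right_eq_Icc, Finset.sum_Ico_eq_sum_range]
      simp
    intro N
    have h2 : ∀ k : ℕ, γ ^ (1 + (k + 1)) = γ * γ ^ (1 + k) := fun k => by ring
    rw [h1, h1, Finset.sum_range_succ', Finset.mul_sum,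
      Finset.sum_congr rfl (fun k _ => h2 k), add_comm]
    norm_num
  -- lower bound
  have lower : ∀ N : ℕ, ∀ (s : S) (u : Fin (N+1) → A),
      Qstar (s, u 0) - c * Sg (N+1) ≤ discCost f l γ Vstar s u := by
    intro N
    induction N with
    | zero =>
      intro s u
      rw [discCost_one]
      have : Sg 1 = γ := by simp [hSg]
      rw [this, hQ s (u 0)]
      exact le_of_eq (by ring)
    | succ N ih =>
      intro s u
      rw [discCost_succ]
      have h1 := ih (f s (u 0)) (fun j : Fin (N+1) => u j.succ)
      have h2 : Vstar (f s (u 0)) - c * Sg (N+1) ≤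
          discCost f l γ Vstar (f s (u 0)) (fun j : Fin (N+1) => u j.succ) := by
        refine le_trans ?_ h1
        have := hVle (f s (u 0)) ((fun j : Fin (N+1) => u j.succ) 0)
        linarith
      have h3 := hSgrec (N+1)
      have h4 := hQ s (u 0)
      calc Qstar (s, u 0) - c * Sg (N+1+1)
          = l s (u 0) + γ * (Vstar (f s (u 0)) - c * Sg (N+1)) := by rw [h4, h3]; ring
        _ ≤ l s (u 0) + γ * discCost f l γ Vstar (f s (u 0)) (fun j : Fin (N+1) => u j.succ) := by
            have := mul_le_mul_of_nonneg_left h2 hγ0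
            linarith
  -- attainment
  have attain : ∀ N : ℕ, ∀ (s : S) (a : A), ∃ u : Fin (N+1) → A,
      u 0 = a ∧ discCost f l γ Vstar s u = Qstar (s, a) - c * Sg (N+1) := by
    intro N
    induction N with
    | zero =>
      intro s a
      refine ⟨fun _ => a, rfl, ?_⟩
      rw [discCost_one]
      have : Sg 1 = γ := by simp [hSg]
      rw [this, hQ s a]
      ring
    | succ N ih =>
      intro s a
      obtain ⟨a', ha'⟩ := hVex (f s a)
      obtain ⟨v, hv0, hv⟩ := ih (f s a) a'
      refine ⟨Fin.cons a v, Fin.cons_zero _ _, ?_⟩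
      rw [discCost_succ]
      have htail : (fun j : Fin (N+1) => (Fin.cons a v : Fin (N+2) → A) j.succ) = v := by
        funext j; simp [Fin.cons_succ]
      rw [Fin.cons_zero, htail, hv, ha', hSgrec (N+1), hQ s a]
      ring
  -- value of QMPC
  have hval : ∀ N : ℕ, 0 < N → ∀ (s : S) (a : A),
      QMPC f l γ Vstar N s a = Qstar (s, a) - c * Sg N := by
    intro N hN s a
    obtain ⟨M, rfl⟩ : ∃ M, N = M + 1 := ⟨N - 1, by omega⟩
    have hne : Nonempty {u : Fin (M+1) → A // ∀ h : 0 < M+1, u ⟨0, h⟩ = a} :=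
      ⟨⟨fun _ => a, fun _ => rfl⟩⟩
    apply le_antisymm
    · obtain ⟨u, hu0, hu⟩ := attain M s a
      have : QMPC f l γ Vstar (M+1) s a ≤ discCost f l γ Vstar s u := by
        apply ciInf_le (Finite.bddBelow_range _) (⟨u, fun _ => hu0⟩ :
          {u : Fin (M+1) → A // ∀ h : 0 < M+1, u ⟨0, h⟩ = a})
      rwa [hu] at this
    · apply le_ciInf
      intro u
      have h0 : u.1 0 = a := u.2 (Nat.succ_pos M)
      have := lower M s u.1
      rwa [h0] at this
  -- conclusion
  intro N hN
  refine ⟨hval N hN, ?_⟩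
  intro s
  ext a
  simp only [Set.mem_setOf_eq, hval N hN]
  constructor
  · intro h a'; have := h a'; linarith
  · intro h a'; have := h a'; linarith
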